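/- Let I ⊂ S = K[x_1,...,x_n] be a squarefree monomial ideal generated in degree d with kd = (k−1)n + 1 and depth S/I^k = 0. Then depth S/I^ℓ = 0 for all ℓ ≥ k: explicitly, if u = (x_1···x_n)^{k−1} is a socle element of S/I^k and v is any minimal generator of I^{ℓ−k}, then uv is a socle element of S/I^ℓ. -/

import Mathlib

open MvPolynomial
open Pointwise

namespace Stmt16Aux

variable {n : ℕ} {K : Type*} [Field K]

lemma prod_monomial {t : ℕ} (f : Fin t → (Fin n →₀ ℕ)) :
    (∏ j, monomial (f j) (1 : K)) = monomial (∑ j, f j) 1 := by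
  classical
  induction t with
  | zero => simp
  | succ t ih =>
      rw [Fin.prod_univ_succ, Fin.sum_univ_succ, ih, monomial_mul, one_mul]


end Stmt16Aux

namespace Stmt16Aux

variable {n : ℕ} {K : Type*} [Field K]

/-- exponent vector of a squarefree monomial -/
noncomputable def sig (F : Finset (Fin n)) : Fin n →₀ ℕ := ∑ i ∈ F, Finsupp.single i 1

/-- total degree of an exponent vector -/
def wdeg (e : Fin n →₀ ℕ) : ℕ := ∑ i, e i

lemma wdeg_add (a b : Fin n →₀ ℕ) : wdeg (a + b) = wdeg a + wdeg b := by
  simp [wdeg, Finset.sum_add_distrib]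

lemma wdeg_mono {a b : Fin n →₀ ℕ} (h : a ≤ b) : wdeg a ≤ wdeg b :=
  Finset.sum_le_sum fun i _ => (Finsupp.le_def.mp h) i

lemma wdeg_smul (c : ℕ) (a : Fin n →₀ ℕ) : wdeg (c • a) = c * wdeg a := by
  simp [wdeg, Finset.mul_sum]

lemma sig_apply (F : Finset (Fin n)) (i : Fin n) :
    sig F i = if i ∈ F then 1 else 0 := by
  classical
  simp [sig, Finsupp.finset_sum_apply, Finsupp.single_apply, Finset.sum_ite_eq]

lemma sig_apply_le (F : Finset (Fin n)) (i : Fin n) : sig F i ≤ 1 := by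
  rw [sig_apply]; split <;> simp

lemma wdeg_sig (F : Finset (Fin n)) : wdeg (sig F) = F.card := by
  classical
  simp [wdeg, sig_apply, Finset.sum_ite_mem, Finset.univ_inter]

lemma prod_X_eq (F : Finset (Fin n)) :
    (∏ i ∈ F, (X i : MvPolynomial (Fin n) K)) = monomial (sig F) 1 := by
  classical
  induction F using Finset.induction with
  | empty => simp [sig]
  | insert _ _ h ih =>
      rw [Finset.prod_insert h, ih]
      simp only [sig]
      rw [Finset.sum_insert h, X, monomial_mul, one_mul]

/-- exponent vectors of products of ℓ generators -/
def setE (B : Set (Fin n →₀ ℕ)) : ℕ → Set (Fin n →₀ ℕ)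
  | 0 => {0}
  | ℓ + 1 => setE B ℓ + B

lemma image_monomial_mul (A B : Set (Fin n →₀ ℕ)) :
    ((fun s => monomial s (1 : K)) '' A) * ((fun s => monomial s (1 : K)) '' B)
      = (fun s => monomial s (1 : K)) '' (A + B) := by
  ext x
  simp only [Set.mem_mul, Set.mem_image, Set.mem_add]
  constructor
  · rintro ⟨_, ⟨a, ha, rfl⟩, _, ⟨b, hb, rfl⟩, rfl⟩
    exact ⟨a + b, ⟨a, ha, b, hb, rfl⟩, by rw [monomial_mul, one_mul]⟩
  · rintro ⟨_, ⟨a, ha, b, hb, rfl⟩, rfl⟩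
    exact ⟨monomial a 1, ⟨a, ha, rfl⟩, monomial b 1, ⟨b, hb, rfl⟩,
      by rw [monomial_mul, one_mul]⟩

lemma span_pow (B : Set (Fin n →₀ ℕ)) (ℓ : ℕ) :
    (Ideal.span ((fun s => monomial s (1 : K)) '' B)) ^ ℓ
      = Ideal.span ((fun s => monomial s (1 : K)) '' setE B ℓ) := by
  induction ℓ with
  | zero => simp [setE, Ideal.span_singleton_one]
  | succ ℓ ih =>
      rw [pow_succ, ih, Ideal.span_mul_span', image_monomial_mul, setE]

lemma setE_wdeg {B : Set (Fin n →₀ ℕ)} {d : ℕ} (hB : ∀ b ∈ B, wdeg b = d) :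
    ∀ ℓ, ∀ e ∈ setE B ℓ, wdeg e = ℓ * d := by
  intro ℓ
  induction ℓ with
  | zero => rintro e he; simp only [setE, Set.mem_singleton_iff] at he; simp [he, wdeg]
  | succ ℓ ih =>
      rintro e ⟨a, ha, b, hb, rfl⟩
      rw [wdeg_add, ih a ha, hB b hb]; ring

lemma setE_coord {B : Set (Fin n →₀ ℕ)} (hB : ∀ b ∈ B, ∀ i, b i ≤ 1) :
    ∀ ℓ, ∀ e ∈ setE B ℓ, ∀ i, e i ≤ ℓ := by
  intro ℓ
  induction ℓ with
  | zero => rintro e he i; simp only [setE, Set.mem_singleton_iff] at he; simp [he]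
  | succ ℓ ih =>
      rintro e ⟨a, ha, b, hb, rfl⟩ i
      have := ih a ha i
      have := hB b hb i
      simp only [Finsupp.add_apply]
      omega

lemma not_mem_span_of_wdeg_lt {B : Set (Fin n →₀ ℕ)} {d ℓ : ℕ}
    (hB : ∀ b ∈ B, wdeg b = d) {m : Fin n →₀ ℕ} (hm : wdeg m < ℓ * d) :
    monomial m (1 : K) ∉ Ideal.span ((fun s => monomial s (1 : K)) '' setE B ℓ) := by
  rw [mem_ideal_span_monomial_image]
  intro h
  have hsupp : m ∈ (monomial m (1 : K)).support := by
    rw [mem_support_iff, coeff_monomial, if_pos rfl]; exact one_ne_zero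
  obtain ⟨e, he, hle⟩ := h m hsupp
  have := wdeg_mono hle
  rw [setE_wdeg hB ℓ e he] at this
  omega

end Stmt16Aux

open Stmt16Aux

/-- If `I` is squarefree, generated in degree `d` with `k*d = (k-1)*n + 1` and
`depth S/I^k = 0`, then `depth S/I^ℓ = 0` for all `ℓ ≥ k`; explicitly, if
`u = (x₁⋯xₙ)^(k-1)` is a socle element of `S/I^k` and `v` is any product of `ℓ - k`
generators of `I`, then `u·v` is a socle element of `S/I^ℓ`. -/
theorem stmt16 (n d k : ℕ) (hk : 1 ≤ k) (hkd : k * d = (k - 1) * n + 1)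
    (K : Type*) [Field K]
    (𝒮 : Set (Finset (Fin n))) (hdeg : ∀ F ∈ 𝒮, F.card = d)
    (I : Ideal (MvPolynomial (Fin n) K))
    (hI : I = Ideal.span ((fun F : Finset (Fin n) => ∏ i ∈ F, (X i : MvPolynomial (Fin n) K)) '' 𝒮))
    (hdepth : ∃ a : Fin n →₀ ℕ, (monomial a (1 : K)) ∉ I ^ k ∧
        ∀ i : Fin n, X i * monomial a (1 : K) ∈ I ^ k) :
    (∀ ℓ : ℕ, k ≤ ℓ → ∃ a : Fin n →₀ ℕ, (monomial a (1 : K)) ∉ I ^ ℓ ∧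
        ∀ i : Fin n, X i * monomial a (1 : K) ∈ I ^ ℓ) ∧
    (((∏ i : Fin n, (X i : MvPolynomial (Fin n) K)) ^ (k - 1) ∉ I ^ k ∧
        ∀ i : Fin n, X i * (∏ j : Fin n, (X j : MvPolynomial (Fin n) K)) ^ (k - 1) ∈ I ^ k) →
      ∀ ℓ : ℕ, k ≤ ℓ → ∀ G : Fin (ℓ - k) → Finset (Fin n), (∀ j, G j ∈ 𝒮) →
        (((∏ i : Fin n, (X i : MvPolynomial (Fin n) K)) ^ (k - 1) *
            ∏ j : Fin (ℓ - k), ∏ i ∈ G j, (X i : MvPolynomial (Fin n) K)) ∉ I ^ ℓ ∧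
          ∀ i : Fin n, X i * ((∏ t : Fin n, (X t : MvPolynomial (Fin n) K)) ^ (k - 1) *
            ∏ j : Fin (ℓ - k), ∏ t ∈ G j, (X t : MvPolynomial (Fin n) K)) ∈ I ^ ℓ)) := by
  classical
  obtain ⟨a, haI, haX⟩ := hdepth
  set B : Set (Fin n →₀ ℕ) := sig '' 𝒮 with hB
  have hIB : I = Ideal.span ((fun s => monomial s (1 : K)) '' B) := by
    rw [hI, hB, Set.image_image]
    congr 1
    exact Set.image_congr fun F _ => prod_X_eq F
  have hBd : ∀ b ∈ B, wdeg b = d := by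
    rintro b ⟨F, hF, rfl⟩; rw [wdeg_sig, hdeg F hF]
  have hB1 : ∀ b ∈ B, ∀ i, b i ≤ 1 := by
    rintro b ⟨F, hF, rfl⟩ i; exact sig_apply_le F i
  have hpow : ∀ ℓ : ℕ, I ^ ℓ = Ideal.span ((fun s => monomial s (1 : K)) '' setE B ℓ) := by
    intro ℓ; rw [hIB, span_pow]
  -- key non-membership lemma
  have key1 : ∀ (ℓ : ℕ) (m : Fin n →₀ ℕ), wdeg m < ℓ * d → monomial m (1 : K) ∉ I ^ ℓ := by
    intro ℓ m hm
    rw [hpow ℓ]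
    exact not_mem_span_of_wdeg_lt hBd hm
  -- socle bound
  have key2 : ∀ j : Fin n, a j ≤ k - 1 := by
    intro j
    by_contra hcon
    have haj : k ≤ a j := by omega
    have hXj := haX j
    have heq : X j * monomial a (1 : K) = monomial (Finsupp.single j 1 + a) 1 := by
      rw [X, monomial_mul, one_mul]
    rw [heq, hpow k, mem_ideal_span_monomial_image] at hXj
    have hsupp : (Finsupp.single j 1 + a) ∈ (monomial (Finsupp.single j 1 + a) (1 : K)).support := by
      rw [mem_support_iff, coeff_monomial, if_pos rfl]; exact one_ne_zero
    obtain ⟨e, he, hle⟩ := hXj _ hsupp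
    apply haI
    rw [hpow k, mem_ideal_span_monomial_image]
    intro xi hxi
    rw [support_monomial, if_neg (one_ne_zero)] at hxi
    rw [Finset.mem_singleton] at hxi
    subst hxi
    refine ⟨e, he, Finsupp.le_def.mpr fun i => ?_⟩
    by_cases hij : i = j
    · subst hij
      exact le_trans (setE_coord hB1 k e he i) haj
    · have := Finsupp.le_def.mp hle i
      rwa [Finsupp.add_apply, Finsupp.single_apply, if_neg (Ne.symm hij), zero_add] at this
  have hwa : wdeg a ≤ (k - 1) * n := by
    calc wdeg a = ∑ i, a i := rfl
    _ ≤ ∑ _i : Fin n, (k - 1) := Finset.sum_le_sum fun i _ => key2 i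
    _ = (k - 1) * n := by rw [Finset.sum_const, Finset.card_univ, Fintype.card_fin,
        smul_eq_mul, mul_comm]
  constructor
  · -- part 1
    intro ℓ hℓ
    have hld : ℓ * d = (ℓ - k) * d + ((k - 1) * n + 1) := by
      rw [← hkd, ← Nat.add_mul]
      congr 1
      omega
    by_cases h𝒮 : 𝒮.Nonempty
    · obtain ⟨F0, hF0⟩ := h𝒮
      refine ⟨a + (ℓ - k) • sig F0, ?_, ?_⟩
      · apply key1
        rw [wdeg_add, wdeg_smul, wdeg_sig, hdeg F0 hF0, hld]
        omega
      · intro i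
        have heq : X i * monomial (a + (ℓ - k) • sig F0) (1 : K)
            = (X i * monomial a 1) * (∏ t ∈ F0, (X t : MvPolynomial (Fin n) K)) ^ (ℓ - k) := by
          rw [prod_X_eq, monomial_pow, one_pow, mul_assoc, monomial_mul, one_mul]
        rw [heq]
        have h1 : X i * monomial a (1 : K) ∈ I ^ k := haX i
        have h2 : (∏ t ∈ F0, (X t : MvPolynomial (Fin n) K)) ^ (ℓ - k) ∈ I ^ (ℓ - k) := by
          apply Ideal.pow_mem_pow
          rw [hI]
          exact Ideal.subset_span ⟨F0, hF0, rfl⟩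
        have := Ideal.mul_mem_mul h1 h2
        rwa [← pow_add, Nat.add_sub_cancel' hℓ] at this
    · have hSempty : 𝒮 = ∅ := Set.not_nonempty_iff_eq_empty.mp h𝒮
      have hIbot : I = ⊥ := by rw [hI, hSempty, Set.image_empty, Ideal.span_empty]
      have hbot : ∀ m : ℕ, 1 ≤ m → I ^ m = ⊥ := by
        intro m hm
        rw [hIbot, ← Ideal.zero_eq_bot, zero_pow (by omega : m ≠ 0)]
      refine ⟨a, ?_, fun i => ?_⟩
      · rw [hbot ℓ (le_trans hk hℓ)]
        simp only [Ideal.mem_bot]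
        intro h0
        exact haI (h0 ▸ (I ^ k).zero_mem)
      · rw [hbot ℓ (le_trans hk hℓ)]
        have := haX i
        rwa [hbot k hk] at this
  · -- part 2
    rintro ⟨huI, huX⟩ ℓ hℓ G hG
    have hld : ℓ * d = (ℓ - k) * d + ((k - 1) * n + 1) := by
      rw [← hkd, ← Nat.add_mul]
      congr 1
      omega
    have hu : (∏ i : Fin n, (X i : MvPolynomial (Fin n) K)) ^ (k - 1)
        = monomial ((k - 1) • sig Finset.univ) 1 := by
      rw [prod_X_eq, monomial_pow, one_pow]
    have hv : (∏ j : Fin (ℓ - k), ∏ i ∈ G j, (X i : MvPolynomial (Fin n) K))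
        = monomial (∑ j, sig (G j)) 1 := by
      rw [← prod_monomial]
      exact Finset.prod_congr rfl fun j _ => prod_X_eq (G j)
    constructor
    · rw [hu, hv, monomial_mul, one_mul]
      apply key1
      rw [wdeg_add, wdeg_smul, wdeg_sig, hld]
      have hsum : wdeg (∑ j, sig (G j)) = (ℓ - k) * d := by
        rw [wdeg]
        calc ∑ i, (∑ j, sig (G j)) i = ∑ j : Fin (ℓ - k), wdeg (sig (G j)) := by
              simp only [Finsupp.finset_sum_apply, wdeg]
              rw [Finset.sum_comm]
        _ = ∑ _j : Fin (ℓ - k), d := Finset.sum_congr rfl fun j _ => by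
              rw [wdeg_sig, hdeg (G j) (hG j)]
        _ = (ℓ - k) * d := by rw [Finset.sum_const, Finset.card_univ, Fintype.card_fin, smul_eq_mul]
      rw [hsum, Finset.card_univ, Fintype.card_fin]
      omega
    · intro i
      rw [← mul_assoc]
      have h1 : X i * (∏ j : Fin n, (X j : MvPolynomial (Fin n) K)) ^ (k - 1) ∈ I ^ k := huX i
      have h2 : (∏ j : Fin (ℓ - k), ∏ s ∈ G j, (X s : MvPolynomial (Fin n) K)) ∈ I ^ (ℓ - k) := by
        have : I ^ (ℓ - k) = ∏ _j : Fin (ℓ - k), I := by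
          rw [Finset.prod_const, Finset.card_univ, Fintype.card_fin]
        rw [this]
        apply Ideal.prod_mem_prod
        intro j _
        rw [hI]
        exact Ideal.subset_span ⟨G j, hG j, rfl⟩
      have := Ideal.mul_mem_mul h1 h2
      rwa [← pow_add, Nat.add_sub_cancel' hℓ] at this
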